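/- Let f : ℝⁿ → ℝ be C¹ with f ≥ 1 and |∇f(x)| ≤ C f(x)^s for all x, where s < 4/3. Then the metric g_x = f(x)^s |dx|² is slowly varying: there exist constants r > 0 and C* > 0 such that for all x, y ∈ ℝⁿ, if |x - y| ≤ r f(x)^(-s/2) then C*⁻¹ ≤ f(x)^(s/2)/f(y)^(s/2) ≤ C*. -/

import Mathlib

/-!
The metric `f(x)^s |dx|²` has length scale `ρ = f^(-s/2)`, and slow variation of the metric is
exactly the statement that `ρ(y)/ρ(x)` stays bounded when `|x - y| ≤ r ρ(x)`. This holds as soon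
as `ρ` is Lipschitz. By the chain rule `|∇ρ| = (|s|/2) f^(-s/2-1) |∇f| ≤ (|s|/2) C f^(s/2-1)`,
which is bounded by `(|s|/2) C` because `f ≥ 1` and `s ≤ 2`.
-/

open scoped NNReal

lemma norm_fderiv_eq_norm_gradient {F : Type*} [NormedAddCommGroup F] [InnerProductSpace ℝ F]
    [CompleteSpace F] (f : F → ℝ) (x : F) : ‖fderiv ℝ f x‖ = ‖gradient f x‖ := by
  rw [← toDual_gradient, LinearIsometryEquiv.norm_map]

section

variable {E : Type*} [NormedAddCommGroup E] [NormedSpace ℝ E] {f : E → ℝ} {C : ℝ≥0} {s a : ℝ}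

lemma norm_fderiv_rpow_le {x : E} (hf : DifferentiableAt ℝ f x) (hfx : 1 ≤ f x)
    (hbound : ‖fderiv ℝ f x‖ ≤ C * f x ^ s) (has : a + s ≤ 1) :
    ‖fderiv ℝ (fun y => f y ^ a) x‖ ≤ |a| * C := by
  have hfx0 : 0 < f x := one_pos.trans_le hfx
  rw [(hf.hasFDerivAt.rpow_const (Or.inl hfx0.ne')).fderiv, norm_smul, Real.norm_eq_abs,
    abs_mul, abs_of_pos (Real.rpow_pos_of_pos hfx0 _)]
  calc |a| * f x ^ (a - 1) * ‖fderiv ℝ f x‖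
      ≤ |a| * f x ^ (a - 1) * (C * f x ^ s) := by gcongr
    _ = |a| * C * f x ^ (a - 1 + s) := by rw [Real.rpow_add hfx0]; ring
    _ ≤ |a| * C * 1 := by gcongr; exact Real.rpow_le_one_of_one_le_of_nonpos hfx (by linarith)
    _ = |a| * C := mul_one _

lemma lipschitzWith_rpow_of_norm_fderiv_le (hf : Differentiable ℝ f) (hf1 : ∀ x, 1 ≤ f x)
    (hbound : ∀ x, ‖fderiv ℝ f x‖ ≤ C * f x ^ s) (has : a + s ≤ 1) :
    LipschitzWith (‖a‖₊ * C) (fun x => f x ^ a) := by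
  refine lipschitzWith_of_nnnorm_fderiv_le
    (fun x => (hf x).rpow_const (Or.inl (one_pos.trans_le (hf1 x)).ne')) fun x => ?_
  rw [← NNReal.coe_le_coe, coe_nnnorm, NNReal.coe_mul, coe_nnnorm, Real.norm_eq_abs]
  exact norm_fderiv_rpow_le (hf x) (hf1 x) (hbound x) has

end

lemma LipschitzWith.div_mem_Icc_of_dist_le {E : Type*} [PseudoMetricSpace E] {ρ : E → ℝ}
    {K : ℝ≥0} {r : ℝ} (hρ : LipschitzWith K ρ) (hrK : K * r ≤ 1 / 2) {x y : E} (hx : 0 < ρ x)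
    (hxy : dist x y ≤ r * ρ x) : ρ y / ρ x ∈ Set.Icc 2⁻¹ 2 := by
  have hclose : |ρ y - ρ x| ≤ ρ x / 2 :=
    calc |ρ y - ρ x| = dist (ρ x) (ρ y) := by rw [Real.dist_eq, abs_sub_comm]
      _ ≤ K * dist x y := hρ.dist_le_mul x y
      _ ≤ K * (r * ρ x) := by gcongr
      _ = (K * r) * ρ x := by ring
      _ ≤ 1 / 2 * ρ x := by gcongr
      _ = ρ x / 2 := by ring
  obtain ⟨hlow, hhigh⟩ := abs_le.mp hclose
  constructor
  · rw [le_div_iff₀ hx]; linarith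
  · rw [div_le_iff₀ hx]; linarith

theorem metric_slowly_varying {n : ℕ}
    (f : EuclideanSpace ℝ (Fin n) → ℝ) (C s : ℝ)
    (hf : ContDiff ℝ 1 f) (hf1 : ∀ x, 1 ≤ f x) (hC : 0 < C) (hs : s < 4 / 3)
    (hgrad : ∀ x, ‖gradient f x‖ ≤ C * f x ^ s) :
    ∃ r > (0 : ℝ), ∃ Cstar > (0 : ℝ),
      ∀ x y : EuclideanSpace ℝ (Fin n), ‖x - y‖ ≤ r * f x ^ (-(s / 2)) →
        Cstar⁻¹ ≤ f x ^ (s / 2) / f y ^ (s / 2) ∧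
          f x ^ (s / 2) / f y ^ (s / 2) ≤ Cstar := by
  set K : ℝ≥0 := ‖-(s / 2)‖₊ * ⟨C, hC.le⟩
  have hρ : LipschitzWith K (fun x => f x ^ (-(s / 2))) :=
    lipschitzWith_rpow_of_norm_fderiv_le (hf.differentiable one_ne_zero) hf1
      (fun x => (norm_fderiv_eq_norm_gradient f x).trans_le (hgrad x)) (by linarith)
  have hrK : (K : ℝ) * (1 / (2 * (K + 1))) ≤ 1 / 2 := by
    rw [mul_one_div, div_le_div_iff₀ (by positivity) two_pos]
    linarith
  refine ⟨1 / (2 * (K + 1)), by positivity, 2, two_pos, fun x y hxy => ?_⟩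
  have hpos : ∀ z, 0 < f z := fun z => one_pos.trans_le (hf1 z)
  have hratio : f y ^ (-(s / 2)) / f x ^ (-(s / 2)) = f x ^ (s / 2) / f y ^ (s / 2) := by
    rw [Real.rpow_neg (hpos y).le, Real.rpow_neg (hpos x).le, inv_div_inv]
  rw [← hratio]
  exact hρ.div_mem_Icc_of_dist_le hrK (Real.rpow_pos_of_pos (hpos x) _) hxy
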